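/- Fix integers n ≥ 2, N ≥ 2 and a real number q > 0. Let Y_N(z) on (ℂⁿ)^{⊗N} be the shuffle operator built from the matrices r_j as follows: r(e_x ⊗ e_y) = e_x ⊗ e_y if x = y; q⁻¹ e_y ⊗ e_x if x < y; q⁻¹ e_y ⊗ e_x + (1 − q⁻²) e_x ⊗ e_y if x > y; r_j acts as r on factors j, j+1; S_m(z) = 1 + z r_m + ⋯ + z^m r_1 ⋯ r_m; Y_N(z) = S_{N−1}(z) ⋯ S_1(z). Let m_1,…,m_n be nonnegative integers with m_1 + ⋯ + m_n = N, and let W(m_1,…,m_n) be the set of words w = (w_1,…,w_N) in the alphabet {1,…,n} containing exactly m_i letters equal to i; set inv(w) = #{(k,l) : k < l, w_k > w_l}. Then for every z ∈ ℂ, Y_N(z)(e_1^{⊗m_1} ⊗ e_2^{⊗m_2} ⊗ ⋯ ⊗ e_n^{⊗m_n}) = (∏_{i=1}^n ⟦m_i⟧_z!) · Σ_{w ∈ W(m_1,…,m_n)} (z q⁻¹)^{inv(w)} e_{w_1} ⊗ e_{w_2} ⊗ ⋯ ⊗ e_{w_N}, where ⟦m⟧_z = 1 + z + z² + ⋯ +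 z^{m−1} and ⟦m⟧_z! = ⟦1⟧_z ⟦2⟧_z ⋯ ⟦m⟧_z, ⟦0⟧_z! = 1. -/

import Mathlib

open Finset Matrix Kronecker

noncomputable section

def rMat (n : ℕ) (q : ℝ) : Matrix (Fin n × Fin n) (Fin n × Fin n) ℂ := fun out inp =>
  if inp.1 = inp.2 then (if out = inp then 1 else 0)
  else (if out = (inp.2, inp.1) then ((q : ℂ))⁻¹ else 0) +
    (if inp.2 < inp.1 ∧ out = inp then 1 - ((q : ℂ))⁻¹ ^ 2 else 0)

/-- The operator `r_j` acting as `rMat` on tensor factors `j, j+1` (0-indexed)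
of `(ℂⁿ)^{⊗N}` and as the identity elsewhere. -/
def rop (n N : ℕ) (q : ℝ) (j : ℕ) : Matrix (Fin N → Fin n) (Fin N → Fin n) ℂ :=
  fun f g =>
    if hj : j + 1 < N then
      rMat n q (f ⟨j, Nat.lt_of_succ_lt hj⟩, f ⟨j + 1, hj⟩)
          (g ⟨j, Nat.lt_of_succ_lt hj⟩, g ⟨j + 1, hj⟩) *
        (if ∀ k : Fin N, k.1 ≠ j → k.1 ≠ j + 1 → f k = g k then 1 else 0)
    else if f = g then 1 else 0

/-- `r_{m-t+1} ⋯ r_m` (math 1-indexed), i.e. `rop (m-t) * ⋯ * rop (m-1)`. -/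
def prodChain (n N : ℕ) (q : ℝ) (m : ℕ) : ℕ → Matrix (Fin N → Fin n) (Fin N → Fin n) ℂ
  | 0 => 1
  | t + 1 => rop n N q (m - (t + 1)) * prodChain n N q m t

/-- `S_m(z) = 1 + z r_m + z² r_{m-1} r_m + ⋯ + z^m r_1 ⋯ r_m`. -/
def Smat (n N : ℕ) (q : ℝ) (m : ℕ) (z : ℂ) : Matrix (Fin N → Fin n) (Fin N → Fin n) ℂ :=
  ∑ t ∈ Finset.range (m + 1), z ^ t • prodChain n N q m t

def Yaux (n N : ℕ) (q : ℝ) (z : ℂ) : ℕ → Matrix (Fin N → Fin n) (Fin N → Fin n) ℂ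
  | 0 => 1
  | m + 1 => Smat n N q (m + 1) z * Yaux n N q z m

/-- The shuffle operator `Y_N(z) = S_{N-1}(z) S_{N-2}(z) ⋯ S_1(z)`. -/
def Ymat (n N : ℕ) (q : ℝ) (z : ℂ) : Matrix (Fin N → Fin n) (Fin N → Fin n) ℂ :=
  Yaux n N q z (N - 1)

/-- Tensor product `A 0 ⊗ A 1 ⊗ ⋯ ⊗ A (N-1)` of a family of `n × n` matrices. -/
def tensorFam {n N : ℕ} (A : Fin N → Matrix (Fin n) (Fin n) ℂ) :
    Matrix (Fin N → Fin n) (Fin N → Fin n) ℂ := fun f g => ∏ k, A k (f k) (g k)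

def Kmat (n : ℕ) (q : ℝ) (j : ℕ) : Matrix (Fin n) (Fin n) ℂ :=
  Matrix.diagonal fun i => if i.1 = j then (Real.sqrt q : ℂ)
    else if i.1 = j + 1 then ((Real.sqrt q : ℂ))⁻¹ else 1

def KmatInv (n : ℕ) (q : ℝ) (j : ℕ) : Matrix (Fin n) (Fin n) ℂ :=
  Matrix.diagonal fun i => if i.1 = j then ((Real.sqrt q : ℂ))⁻¹
    else if i.1 = j + 1 then (Real.sqrt q : ℂ) else 1

/-- `E_j = Σ_k (K_j⁻¹)^{⊗(k-1)} ⊗ e_{j+1,j} ⊗ K_j^{⊗(N-k)}` (0-indexed `j`). -/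
def Eop (n N : ℕ) (q : ℝ) (j : ℕ) (hj : j + 1 < n) :
    Matrix (Fin N → Fin n) (Fin N → Fin n) ℂ :=
  ∑ k : Fin N, tensorFam fun m =>
    if m.1 < k.1 then KmatInv n q j
    else if m = k then Matrix.single ⟨j + 1, hj⟩ ⟨j, Nat.lt_of_succ_lt hj⟩ 1
    else Kmat n q j

def Fop (n N : ℕ) (q : ℝ) (j : ℕ) (hj : j + 1 < n) :
    Matrix (Fin N → Fin n) (Fin N → Fin n) ℂ :=
  ∑ k : Fin N, tensorFam fun m =>
    if m.1 < k.1 then KmatInv n q j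
    else if m = k then Matrix.single ⟨j, Nat.lt_of_succ_lt hj⟩ ⟨j + 1, hj⟩ 1
    else Kmat n q j

/-- `q^{𝓔_i} = (q^{e_{i,i}})^{⊗N}`. -/
def qEop (n N : ℕ) (q : ℝ) (i : Fin n) : Matrix (Fin N → Fin n) (Fin N → Fin n) ℂ :=
  tensorFam fun _ => Matrix.diagonal fun a => if a = i then (q : ℂ) else 1

/-- number of letters `i` in the word `w`. -/
def content {n N : ℕ} (w : Fin N → Fin n) (i : Fin n) : ℕ :=
  (Finset.univ.filter fun k => w k = i).card

/-- number of inversions of the word `w`. -/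
def invw {n N : ℕ} (w : Fin N → Fin n) : ℕ :=
  (Finset.univ.filter fun p : Fin N × Fin N => p.1 < p.2 ∧ w p.2 < w p.1).card

/-- the (unnormalized) q-Dicke state `b⁰_{k₁…k_n}`. -/
def bstate (n N : ℕ) (q : ℝ) (k : Fin n → ℕ) : (Fin N → Fin n) → ℂ :=
  ∑ w ∈ Finset.univ.filter (fun w : Fin N → Fin n => ∀ i, content w i = k i),
    ((q : ℂ) ^ invw w) • (Pi.single w 1 : (Fin N → Fin n) → ℂ)


/-- The `z`-integer `⟦m⟧_z = 1 + z + ⋯ + z^{m-1}`. -/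
def qint (z : ℂ) (m : ℕ) : ℂ := ∑ t ∈ Finset.range m, z ^ t

/-- The `z`-factorial `⟦m⟧_z! = ⟦1⟧_z ⟦2⟧_z ⋯ ⟦m⟧_z`, with `⟦0⟧_z! = 1`. -/
def qfact (z : ℂ) (m : ℕ) : ℂ := ∏ t ∈ Finset.range m, qint z (t + 1)

/-!
Write `e_w` for the basis vector of a word `w`. By induction on `L`, the operator
`S_{L-1}(z) ⋯ S_1(z)` sends `e_{w₀}` to `(∏ᵢ ⟦cᵢ⟧_z!) Σ_w (z q⁻¹)^{inv w} e_w`, where `cᵢ` counts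
the letters `i` among the first `L` letters of `w₀` and `w` runs over the words obtained from `w₀`
by rearranging those `L` letters.

The term `z^t r_{L-t+1} ⋯ r_L` of `S_L(z)` moves the letter at (0-indexed) position `L` to position
`p = L - t` by adjacent swaps. Since `w₀` is weakly increasing, that letter `c` is at least every
letter before it, so each swap passes either a smaller letter (factor `q⁻¹` and one new inversion)
or an equal one (identity, no new inversion). Hence `(z q⁻¹)^{inv w} e_w` goes to
`(z q⁻¹)^{inv w'} z^e e_{w'}`, with `e` the number of copies of `c` in `w'` after `p` and up to `L`.
Every word `w'` of the next stage arises exactly once from each copy of `c` among its first `L + 1`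
letters, and the sum of `z^e` over these copies is `⟦#copies⟧_z`, the new factor of the
`z`-factorial.
-/

open Equiv Fin

lemma sum_pow_card_filter_gt {α : Type*} [LinearOrder α] (z : ℂ) (T : Finset α) :
    ∑ p ∈ T, z ^ #{x ∈ T | p < x} = qint z #T := by
  refine Finset.induction_on_min T (by simp [qint]) fun a s ha ih => ?_
  have ha' : a ∉ s := fun h => lt_irrefl a (ha a h)
  have htop : {x ∈ insert a s | a < x} = s := by
    ext x
    simp only [mem_filter, mem_insert]
    exact ⟨fun ⟨hx, hax⟩ => hx.resolve_left hax.ne', fun hx => ⟨Or.inr hx, ha x hx⟩⟩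
  have hrest : ∀ p ∈ s, {x ∈ insert a s | p < x} = {x ∈ s | p < x} := fun p hp => by
    rw [filter_insert, if_neg (ha p hp).not_gt]
  rw [sum_insert ha', card_insert_of_notMem ha', htop, sum_congr rfl fun p hp => by rw [hrest p hp],
    ih, qint, qint, sum_range_succ, add_comm]

section Words

variable {n N : ℕ}

lemma content_comp_perm (w : Fin N → Fin n) (σ : Perm (Fin N)) (i : Fin n) :
    content (w ∘ σ) i = content w i :=
  card_equiv σ (by simp)

lemma invw_eq_zero_of_monotone {w : Fin N → Fin n} (hw : Monotone w) : invw w = 0 := by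
  simp only [invw, card_eq_zero, filter_eq_empty_iff, not_and, not_lt]
  exact fun _ _ h => hw h.le

lemma swap_lt_swap_of_adjacent {a b x y : Fin N} (hab : a.1 + 1 = b.1) (hxy : x < y)
    (hne : ¬(x = a ∧ y = b)) : swap a b x < swap a b y := by
  rw [Fin.lt_def] at hxy ⊢
  simp only [swap_apply_def]
  split_ifs <;> simp_all [Fin.ext_iff] <;> omega

lemma invw_comp_swap_of_lt (u : Fin N → Fin n) {a b : Fin N} (hab : a.1 + 1 = b.1)
    (h : u a < u b) : invw (u ∘ swap a b) = invw u + 1 := by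
  have hlt : a < b := Fin.lt_def.2 (by omega)
  rw [invw, ← card_erase_add_one (a := (a, b)) (by simpa [hlt] using h), invw]
  congr 1
  refine card_equiv ((swap a b).prodCongr (swap a b)) fun ⟨x, y⟩ => ?_
  simp only [mem_erase, mem_filter, mem_univ, true_and, ne_eq, Prod.mk.injEq, prodCongr_apply,
    Prod.map, Function.comp_apply]
  constructor
  · rintro ⟨hne, hxy, hu⟩
    exact ⟨swap_lt_swap_of_adjacent hab hxy hne, hu⟩
  · rintro ⟨hxy, hu⟩
    refine ⟨?_, ?_, hu⟩
    · rintro ⟨rfl, rfl⟩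
      simp only [swap_apply_left, swap_apply_right] at hxy
      exact hxy.not_gt hlt
    · simpa using swap_lt_swap_of_adjacent hab hxy fun ⟨hx, hy⟩ => by
        rw [hx, hy] at hu
        exact hu.not_gt h

end Words

section Rop

variable {n N : ℕ} (q : ℝ)

lemma eq_iff_apply_pair_and_forall {α β : Type*} (f g : α → β) (a b : α) :
    f = g ↔ (f a, f b) = (g a, g b) ∧ ∀ k, k ≠ a → k ≠ b → f k = g k := by
  refine ⟨by rintro rfl; simp, fun ⟨hab, hk⟩ => funext fun k => ?_⟩
  simp only [Prod.mk.injEq] at hab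
  by_cases ha : k = a
  · rw [ha, hab.1]
  by_cases hb : k = b
  · rw [hb, hab.2]
  exact hk k ha hb

lemma rop_apply {a b : Fin N} (hab : a.1 + 1 = b.1) (f g : Fin N → Fin n) :
    rop n N q a f g =
      if ∀ k, k ≠ a → k ≠ b → f k = g k then rMat n q (f a, f b) (g a, g b) else 0 := by
  obtain ⟨b, hb⟩ := b
  obtain rfl : a.1 + 1 = b := hab
  simp [rop, hb, Fin.ext_iff, mul_ite]

lemma rop_mulVec_single_of_eq {w : Fin N → Fin n} {a b : Fin N} (hab : a.1 + 1 = b.1)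
    (h : w a = w b) : rop n N q a *ᵥ Pi.single w 1 = Pi.single w 1 := by
  ext f
  rw [mulVec_single_one, col_apply, rop_apply q hab, Pi.single_apply]
  simp only [eq_iff_apply_pair_and_forall f w a b]
  simp only [rMat, h, ite_and]
  split_ifs <;> simp_all

lemma rop_mulVec_single_of_lt {w : Fin N → Fin n} {a b : Fin N} (hab : a.1 + 1 = b.1)
    (h : w a < w b) :
    rop n N q a *ᵥ Pi.single w 1 = (q : ℂ)⁻¹ • Pi.single (w ∘ swap a b) 1 := by
  have hoff : ∀ k, k ≠ a → k ≠ b → (w ∘ swap a b) k = w k := fun k ha hb => by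
    simp [swap_apply_of_ne_of_ne ha hb]
  ext f
  rw [mulVec_single_one, col_apply, rop_apply q hab, Pi.smul_apply, Pi.single_apply]
  simp only [eq_iff_apply_pair_and_forall f (w ∘ swap a b) a b]
  simp only [rMat, h.ne, h.not_gt, ite_and]
  split_ifs <;> simp_all

end Rop

section Chain

variable {n N : ℕ} (q : ℝ) (z : ℂ)

def numRepeatsAfter (w : Fin N → Fin n) (p r : Fin N) : ℕ := #{j ∈ Ioc p r | w j = w p}

lemma numRepeatsAfter_self (w : Fin N → Fin n) (r : Fin N) : numRepeatsAfter w r r = 0 := by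
  simp [numRepeatsAfter]

lemma numRepeatsAfter_comp_swap (u : Fin N → Fin n) {p p' r : Fin N} (hp : p.1 + 1 = p'.1)
    (hp'r : p' ≤ r) :
    numRepeatsAfter (u ∘ swap p p') p r = numRepeatsAfter u p' r + if u p = u p' then 1 else 0 := by
  have hIoc : Ioc p r = insert p' (Ioc p' r) := by
    ext j
    simp only [mem_Ioc, mem_insert, Fin.lt_def, Fin.le_def, Fin.ext_iff] at hp'r ⊢
    omega
  have hfix : ∀ j ∈ Ioc p' r, u (swap p p' j) = u j := fun j hj => by
    rw [mem_Ioc] at hj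
    have hjp : j ≠ p := by rintro rfl; rw [Fin.lt_def] at hj; omega
    rw [swap_apply_of_ne_of_ne hjp hj.1.ne']
  rw [numRepeatsAfter, numRepeatsAfter, hIoc, filter_insert]
  simp only [Function.comp_apply, swap_apply_left, swap_apply_right]
  rw [filter_congr fun j hj => by rw [hfix j hj]]
  split_ifs with h
  · rw [card_insert_of_notMem (by simp)]
  · rfl

lemma cycleIcc_eq_swap [NeZero N] {p p' : Fin N} (hp : p.1 + 1 = p'.1) :
    cycleIcc p p' = swap p p' := by
  ext x
  rcases lt_or_ge x p with hx | hpx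
  · have hxp' : x ≠ p' := by rintro rfl; rw [Fin.lt_def] at hx; omega
    rw [cycleIcc_of_lt hx, swap_apply_of_ne_of_ne hx.ne hxp']
  rcases lt_or_ge p' x with hx | hxp'
  · have hxp : x ≠ p := by rintro rfl; rw [Fin.lt_def] at hx; omega
    rw [cycleIcc_of_gt hx, swap_apply_of_ne_of_ne hxp hx.ne']
  have hpp' : p < p' := Fin.lt_def.2 (by omega)
  obtain rfl | rfl : x = p ∨ x = p' := by simp only [Fin.le_def, Fin.ext_iff] at *; omega
  · rw [cycleIcc_of_le_of_le le_rfl hpp'.le, if_neg hpp'.ne, swap_apply_left]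
    rw [val_add_one_of_lt' (hp ▸ p'.2), hp]
  · rw [cycleIcc_of_last hpp'.le, swap_apply_right]

lemma smul_rop_mulVec_weighted {p p' r : Fin N} (hp : p.1 + 1 = p'.1) (hp'r : p' ≤ r)
    (u : Fin N → Fin n) (h : u p ≤ u p') :
    z • (rop n N q p *ᵥ (((z * (q : ℂ)⁻¹) ^ invw u * z ^ numRepeatsAfter u p' r) •
        Pi.single u 1)) =
      ((z * (q : ℂ)⁻¹) ^ invw (u ∘ swap p p') * z ^ numRepeatsAfter (u ∘ swap p p') p r) •
        Pi.single (u ∘ swap p p') 1 := by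
  rw [mulVec_smul, numRepeatsAfter_comp_swap u hp hp'r]
  rcases h.lt_or_eq with h | h
  · rw [rop_mulVec_single_of_lt q hp h, invw_comp_swap_of_lt u hp h, if_neg h.ne, smul_smul,
      smul_smul]
    congr 1
    ring
  · have hu : u ∘ swap p p' = u := funext (apply_swap_eq_self h)
    rw [rop_mulVec_single_of_eq q hp h, hu, if_pos h, smul_smul]
    congr 1
    ring

lemma prodChain_mulVec_single [NeZero N] {p r : Fin N} (hpr : p ≤ r) (w : Fin N → Fin n)
    (hw : ∀ j, p ≤ j → j ≤ r → w j ≤ w r) :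
    ((z * (q : ℂ)⁻¹) ^ invw w * z ^ (r - p : ℕ)) •
        (prodChain n N q r (r - p) *ᵥ Pi.single w 1) =
      ((z * (q : ℂ)⁻¹) ^ invw (w ∘ ⇑(cycleIcc p r)⁻¹) *
          z ^ numRepeatsAfter (w ∘ ⇑(cycleIcc p r)⁻¹) p r) •
        Pi.single (w ∘ ⇑(cycleIcc p r)⁻¹) 1 := by
  obtain ⟨d, hd⟩ : ∃ d, (r : ℕ) - p = d := ⟨_, rfl⟩
  induction d generalizing p with
  | zero =>
    obtain rfl : p = r := le_antisymm hpr (Fin.le_def.2 (by omega))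
    rw [Nat.sub_self, cycleIcc_eq, numRepeatsAfter_self]
    simp only [prodChain, one_mulVec, inv_one, Perm.coe_one, Function.comp_id, pow_zero,
      mul_one]
  | succ d ih =>
    have hp'N : p.1 + 1 < N := by have := r.2; omega
    set p' : Fin N := ⟨p + 1, hp'N⟩
    have hpp' : p.1 + 1 = p'.1 := rfl
    have hp'r : p' ≤ r := Fin.le_def.2 (by simp only [p']; omega)
    have hd' : (r : ℕ) - p' = d := by simp only [p']; omega
    set u := w ∘ ⇑(cycleIcc p' r)⁻¹ with hu
    have hcyc : w ∘ ⇑(cycleIcc p r)⁻¹ = u ∘ swap p p' := by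
      have hmul : cycleIcc p r = swap p p' * cycleIcc p' r := by
        rw [← cycleIcc_eq_swap hpp']
        exact DFunLike.coe_injective (cycleIcc.trans (Fin.le_def.2 (by omega)) hp'r).symm
      rw [hmul, _root_.mul_inv_rev, swap_inv, Perm.coe_mul]
      rfl
    have hup : u p ≤ u p' := by
      have h1 : (cycleIcc p' r)⁻¹ p = p :=
        Perm.inv_eq_iff_eq.2 (cycleIcc_of_lt (Fin.lt_def.2 (by omega))).symm
      have h2 : (cycleIcc p' r)⁻¹ p' = r := Perm.inv_eq_iff_eq.2 (cycleIcc_of_last hp'r).symm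
      simp only [hu, Function.comp_apply, h1, h2]
      exact hw p le_rfl hpr
    rw [hd, prodChain, show (r : ℕ) - (d + 1) = p by omega, ← mulVec_mulVec, hcyc,
      ← smul_rop_mulVec_weighted q z hpp' hp'r u hup,
      ← ih hp'r (fun j hj => hw j ((Fin.le_def.2 (by omega) : p ≤ p').trans hj))
        hd', hd', mulVec_smul, smul_smul]
    congr 1
    ring

end Chain

section Prefix

variable {n N : ℕ}

def pcount (w : Fin N → Fin n) (L : ℕ) (i : Fin n) : ℕ := #{j : Fin N | j.1 < L ∧ w j = i}

def prefixShuffles (w0 : Fin N → Fin n) (L : ℕ) : Finset (Fin N → Fin n) :=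
  {w | (∀ j : Fin N, L ≤ j.1 → w j = w0 j) ∧ ∀ i, content w i = content w0 i}

lemma content_eq_pcount_add (w : Fin N → Fin n) (L : ℕ) (i : Fin n) :
    content w i = pcount w L i + #{j : Fin N | L ≤ j.1 ∧ w j = i} := by
  rw [content, pcount, ← card_filter_add_card_filter_not (fun j : Fin N => j.1 < L),
    filter_filter, filter_filter]
  simp only [not_lt, and_comm]

lemma pcount_eq_of_mem_prefixShuffles {w0 w : Fin N → Fin n} {L : ℕ}
    (hw : w ∈ prefixShuffles w0 L) (i : Fin n) : pcount w L i = pcount w0 L i := by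
  rw [prefixShuffles, mem_filter] at hw
  have htail : #{j : Fin N | L ≤ j.1 ∧ w j = i} = #{j : Fin N | L ≤ j.1 ∧ w0 j = i} := by
    congr 1
    exact filter_congr fun j _ => and_congr_right fun hj => by rw [hw.2.1 j hj]
  have := content_eq_pcount_add w L i
  have := content_eq_pcount_add w0 L i
  have := hw.2.2 i
  omega

lemma pcount_of_le (w : Fin N → Fin n) {L : ℕ} (hL : N ≤ L) (i : Fin n) :
    pcount w L i = content w i := by
  rw [pcount, content]
  exact congrArg card (filter_congr fun j _ => by simp [j.2.trans_le hL])

lemma pcount_succ (w : Fin N → Fin n) (r : Fin N) (i : Fin n) :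
    pcount w (r + 1) i = pcount w r i + if w r = i then 1 else 0 := by
  have hlt : ∀ j : Fin N, j.1 < r + 1 ↔ j.1 < r ∨ j = r := fun j => by rw [Fin.ext_iff]; omega
  have hsplit : ({j : Fin N | j.1 < r + 1 ∧ w j = i} : Finset (Fin N)) =
      univ.filter (fun j : Fin N => j.1 < r ∧ w j = i) ∪
        univ.filter (fun j => j = r ∧ w j = i) := by
    ext j
    simp only [mem_union, mem_filter, mem_univ, true_and, hlt, or_and_right]
  rw [pcount, pcount, hsplit, card_union_of_disjoint (disjoint_filter.2 fun j _ h1 h2 => by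
    rw [h2.1] at h1; exact h1.1.false)]
  congr 1
  split_ifs with h
  · have : ({j : Fin N | j = r ∧ w j = i} : Finset (Fin N)) = {r} := by
      ext j
      simp only [mem_filter, mem_univ, true_and, mem_singleton, and_iff_left_iff_imp]
      exact fun hj => hj ▸ h
    rw [this, card_singleton]
  · exact card_eq_zero.2 (filter_eq_empty_iff.2 fun j _ hj => h (hj.1 ▸ hj.2))

lemma prefixShuffles_zero (w0 : Fin N → Fin n) : prefixShuffles w0 0 = {w0} := by
  ext w
  simp only [prefixShuffles, mem_filter, mem_univ, true_and, mem_singleton, Nat.zero_le,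
    forall_const]
  exact ⟨fun h => funext h.1, by rintro rfl; simp⟩

lemma prefixShuffles_of_le (w0 : Fin N → Fin n) {L : ℕ} (hL : N ≤ L) :
    prefixShuffles w0 L = ({w | ∀ i, content w i = content w0 i} : Finset _) := by
  ext w
  simp only [prefixShuffles, mem_filter, mem_univ, true_and, and_iff_right_iff_imp]
  exact fun _ j hj => absurd j.2 (by omega)

lemma exists_eq_of_mem_prefixShuffles {w0 w : Fin N → Fin n} {L : ℕ}
    (hw : w ∈ prefixShuffles w0 L) {j : Fin N} (hj : j.1 < L) : ∃ j', j'.1 < L ∧ w0 j' = w j := by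
  have : 0 < pcount w0 L (w j) := by
    rw [← pcount_eq_of_mem_prefixShuffles hw]
    exact card_pos.2 ⟨j, by simp [hj]⟩
  obtain ⟨j', hj'⟩ := card_pos.1 this
  exact ⟨j', by simpa using hj'⟩

lemma le_of_mem_prefixShuffles {w0 w : Fin N → Fin n} (hw0 : Monotone w0) {r : Fin N}
    (hw : w ∈ prefixShuffles w0 r) {j : Fin N} (hj : j ≤ r) : w j ≤ w r := by
  have hr : w r = w0 r := (mem_filter.1 hw).2.1 r le_rfl
  rcases hj.lt_or_eq with hj | rfl
  · obtain ⟨j', hj', hj'w⟩ := exists_eq_of_mem_prefixShuffles hw (Fin.lt_def.1 hj)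
    rw [← hj'w, hr]
    exact hw0 (Fin.le_def.2 hj'.le)
  · exact le_rfl

lemma mem_prefixShuffles_iff_comp_inv [NeZero N] (w0 : Fin N → Fin n) {p r : Fin N} (hpr : p ≤ r)
    (w : Fin N → Fin n) :
    w ∈ prefixShuffles w0 r ↔
      w ∘ ⇑(cycleIcc p r)⁻¹ ∈ prefixShuffles w0 (r + 1) ∧ (w ∘ ⇑(cycleIcc p r)⁻¹) p = w0 r := by
  have hp : (cycleIcc p r)⁻¹ p = r := Perm.inv_eq_iff_eq.2 (cycleIcc_of_last hpr).symm
  have hgt : ∀ j, r < j → (cycleIcc p r)⁻¹ j = j := fun j hj =>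
    Perm.inv_eq_iff_eq.2 (cycleIcc_of_gt hj).symm
  simp only [prefixShuffles, mem_filter, mem_univ, true_and, content_comp_perm,
    Function.comp_apply, hp]
  constructor
  · rintro ⟨hw, hc⟩
    exact ⟨⟨fun j hj => by rw [hgt j (Fin.lt_def.2 hj), hw j (by omega)], hc⟩, hw r le_rfl⟩
  · rintro ⟨⟨hw, hc⟩, hr⟩
    refine ⟨fun j hj => ?_, hc⟩
    rcases (Fin.le_def.2 hj : r ≤ j).lt_or_eq with hj | rfl
    · rw [← hw j (Fin.lt_def.1 hj), hgt j hj]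
    · exact hr

end Prefix

section Shuffle

variable {n N : ℕ} (q : ℝ) (z : ℂ)

lemma Smat_eq_sum_Iic (r : Fin N) :
    Smat n N q r z = ∑ p ∈ Iic r, z ^ (r - p : ℕ) • prodChain n N q r (r - p) := by
  rw [Smat, ← sum_range_reflect, Nat.range_succ_eq_Iic, ← Fin.map_valEmbedding_Iic, sum_map]
  simp

lemma Smat_zero : Smat n N q 0 z = 1 := by
  simp [Smat, prodChain]

lemma prod_qfact_pcount_succ (w0 : Fin N → Fin n) (r : Fin N) :
    ∏ i, qfact z (pcount w0 (r + 1) i) =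
      qint z (pcount w0 (r + 1) (w0 r)) * ∏ i, qfact z (pcount w0 r i) := by
  have hrest : ∀ i ∈ univ.erase (w0 r), qfact z (pcount w0 (r + 1) i) = qfact z (pcount w0 r i) :=
    fun i hi => by rw [pcount_succ, if_neg (ne_of_mem_erase hi).symm, add_zero]
  rw [← mul_prod_erase univ _ (mem_univ (w0 r)), ← mul_prod_erase univ _ (mem_univ (w0 r)),
    prod_congr rfl hrest, pcount_succ, if_pos rfl, qfact, prod_range_succ, ← qfact]
  ring

def shuffleState (w0 : Fin N → Fin n) (L : ℕ) : (Fin N → Fin n) → ℂ :=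
  (∏ i, qfact z (pcount w0 L i)) •
    ∑ w ∈ prefixShuffles w0 L, ((z * (q : ℂ)⁻¹) ^ invw w) • Pi.single w 1

lemma shuffleState_zero {w0 : Fin N → Fin n} (hw0 : Monotone w0) :
    shuffleState q z w0 0 = Pi.single w0 1 := by
  simp [shuffleState, pcount, prefixShuffles_zero, qfact, invw_eq_zero_of_monotone hw0]

theorem Smat_mulVec_shuffleState {w0 : Fin N → Fin n} (hw0 : Monotone w0) (r : Fin N) :
    Smat n N q r z *ᵥ shuffleState q z w0 r = shuffleState q z w0 (r + 1) := by
  have : NeZero N := NeZero.of_pos r.pos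
  set F : (Fin N → Fin n) → Fin N → (Fin N → Fin n) → ℂ := fun w p =>
    ((z * (q : ℂ)⁻¹) ^ invw w * z ^ numRepeatsAfter w p r) • Pi.single w 1
  have hmove : ∀ w ∈ prefixShuffles w0 r,
      Smat n N q r z *ᵥ ((z * (q : ℂ)⁻¹) ^ invw w • Pi.single w 1) =
        ∑ p ∈ Iic r, F (w ∘ ⇑(cycleIcc p r)⁻¹) p := fun w hw => by
    rw [Smat_eq_sum_Iic, sum_mulVec]
    refine sum_congr rfl fun p hp => ?_
    rw [smul_mulVec, mulVec_smul, smul_smul, mul_comm (z ^ _), prodChain_mulVec_single q z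
      (mem_Iic.1 hp) w fun j _ hj => le_of_mem_prefixShuffles hw0 hw hj]
  have hfiber : ∀ p ∈ Iic r, ∑ w ∈ prefixShuffles w0 r, F (w ∘ ⇑(cycleIcc p r)⁻¹) p =
      ∑ w ∈ {w ∈ prefixShuffles w0 (r + 1) | w p = w0 r}, F w p := fun p hp =>
    sum_equiv ((cycleIcc p r).arrowCongr (Equiv.refl _))
      (fun w => by rw [mem_filter]; exact mem_prefixShuffles_iff_comp_inv w0 (mem_Iic.1 hp) w)
      fun _ _ => rfl
  have hrepeats : ∀ w ∈ prefixShuffles w0 (r + 1),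
      ∑ p ∈ {p ∈ Iic r | w p = w0 r}, z ^ numRepeatsAfter w p r =
        qint z (pcount w0 (r + 1) (w0 r)) := fun w hw => by
    have hcard : pcount w (r + 1) (w0 r) = #{p ∈ Iic r | w p = w0 r} := by
      rw [pcount]
      congr 1
      ext j
      simp only [mem_filter, mem_univ, true_and, mem_Iic, Fin.le_def, Nat.lt_succ_iff]
    rw [← pcount_eq_of_mem_prefixShuffles hw, hcard, ← sum_pow_card_filter_gt]
    refine sum_congr rfl fun p hp => congrArg (z ^ ·) (congrArg card ?_)
    rw [mem_filter] at hp
    ext x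
    simp only [mem_filter, mem_Ioc, mem_Iic, hp.2]
    tauto
  calc Smat n N q r z *ᵥ shuffleState q z w0 r
      = (∏ i, qfact z (pcount w0 r i)) •
          ∑ w ∈ prefixShuffles w0 r, ∑ p ∈ Iic r, F (w ∘ ⇑(cycleIcc p r)⁻¹) p := by
        rw [shuffleState, mulVec_smul, mulVec_sum, sum_congr rfl hmove]
    _ = (∏ i, qfact z (pcount w0 r i)) •
          ∑ p ∈ Iic r, ∑ w ∈ {w ∈ prefixShuffles w0 (r + 1) | w p = w0 r}, F w p := by
        rw [sum_comm, sum_congr rfl hfiber]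
    _ = (∏ i, qfact z (pcount w0 r i)) •
          ∑ w ∈ prefixShuffles w0 (r + 1), ∑ p ∈ {p ∈ Iic r | w p = w0 r}, F w p := by
        rw [sum_comm' (t' := prefixShuffles w0 (r + 1)) (s' := fun w => {p ∈ Iic r | w p = w0 r})
          fun p w => by simp only [mem_filter]; tauto]
    _ = (∏ i, qfact z (pcount w0 r i)) • ∑ w ∈ prefixShuffles w0 (r + 1),
          qint z (pcount w0 (r + 1) (w0 r)) • ((z * (q : ℂ)⁻¹) ^ invw w • Pi.single w 1) := by
        congr 1
        refine sum_congr rfl fun w hw => ?_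
        simp only [F, mul_comm ((z * (q : ℂ)⁻¹) ^ _), mul_smul]
        rw [← sum_smul, hrepeats w hw]
    _ = shuffleState q z w0 (r + 1) := by
        rw [shuffleState, prod_qfact_pcount_succ, ← smul_sum, smul_smul, mul_comm]

theorem Yaux_mulVec_single {w0 : Fin N → Fin n} (hw0 : Monotone w0) {k : ℕ} (hk : k < N) :
    Yaux n N q z k *ᵥ Pi.single w0 1 = shuffleState q z w0 (k + 1) := by
  induction k with
  | zero =>
    have := Smat_mulVec_shuffleState q z hw0 ⟨0, hk⟩
    rw [Yaux, one_mulVec, ← shuffleState_zero q z hw0]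
    simpa [Smat_zero] using this
  | succ k ih =>
    rw [Yaux, ← mulVec_mulVec, ih (by omega)]
    exact Smat_mulVec_shuffleState q z hw0 ⟨k + 1, hk⟩

end Shuffle

theorem stmt6_general (n N : ℕ) (q : ℝ) (m : Fin n → ℕ)
    (w0 : Fin N → Fin n) (hw0 : Monotone w0) (hw0c : ∀ i, content w0 i = m i) (z : ℂ) :
    (Ymat n N q z).mulVec (Pi.single w0 1) =
      (∏ i, qfact z (m i)) •
        ∑ w ∈ Finset.univ.filter (fun w : Fin N → Fin n => ∀ i, content w i = m i),
          ((z * ((q : ℂ))⁻¹) ^ invw w) • (Pi.single w 1 : (Fin N → Fin n) → ℂ) := by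
  have hY : Ymat n N q z *ᵥ Pi.single w0 1 = shuffleState q z w0 N := by
    rcases N.eq_zero_or_pos with rfl | hN
    · rw [Ymat, Yaux, one_mulVec, shuffleState_zero q z hw0]
    · rw [Ymat, Yaux_mulVec_single q z hw0 (by omega), Nat.sub_add_cancel hN]
  simp only [hY, shuffleState, pcount_of_le w0 le_rfl, prefixShuffles_of_le w0 le_rfl, hw0c]

/-- the action of the shuffle operator `Y_N(z)` on the ordered state
`e_1^{⊗m₁} ⊗ ⋯ ⊗ e_n^{⊗m_n}` (here characterized as the unique weakly increasing
word `w₀` with content `m`) yields `(∏ᵢ ⟦mᵢ⟧_z!)` times the sum over all words `w`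
of content `m` of `(z q⁻¹)^{inv(w)}` times the corresponding basis state. -/
theorem stmt6 (n N : ℕ) (hn : 2 ≤ n) (hN : 2 ≤ N) (q : ℝ) (hq : 0 < q)
    (m : Fin n → ℕ) (hm : ∑ i, m i = N)
    (w0 : Fin N → Fin n) (hw0 : Monotone w0) (hw0c : ∀ i, content w0 i = m i) (z : ℂ) :
    (Ymat n N q z).mulVec (Pi.single w0 1) =
      (∏ i, qfact z (m i)) •
        ∑ w ∈ Finset.univ.filter (fun w : Fin N → Fin n => ∀ i, content w i = m i),
          ((z * ((q : ℂ))⁻¹) ^ invw w) • (Pi.single w 1 : (Fin N → Fin n) → ℂ) :=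
  stmt6_general n N q m w0 hw0 hw0c z

end
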